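/- For every L₀ > 0, the integral q(L₀) = ∫_ℝ (1 + u²) e^{−u²/2} / ( Φ(u + L₀) − Φ(u − L₀) ) du is finite, where Φ denotes the standard normal cumulative distribution function Φ(t) = (2π)^{−1/2} ∫_{−∞}^{t} e^{−x²/2} dx. -/

import Mathlib

open MeasureTheory

/-- The standard normal cumulative distribution function. -/
noncomputable def stdNormalCDF (t : ℝ) : ℝ :=
  ∫ x in Set.Iic t, (Real.sqrt (2 * Real.pi))⁻¹ * Real.exp (-x ^ 2 / 2)

/-!
The denominator is the normal mass of the window `[u - L₀, u + L₀]`. For `|u| ≥ L₀` the window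
contains (up to reflection) the interval `[|u| - L₀, |u| - L₀/2]`, on which the density is at least
`φ(|u| - L₀/2)`. Dividing, the Gaussian factors cancel up to `exp (L₀²/8 - L₀|u|/2)`, so the
integrand is `O((1 + u²) exp (-L₀|u|/2))` at infinity, hence integrable, being continuous.
-/

open Real Set Filter Asymptotics

noncomputable def stdNormalPDF (x : ℝ) : ℝ := (√(2 * π))⁻¹ * exp (-x ^ 2 / 2)

lemma stdNormalPDF_pos (x : ℝ) : 0 < stdNormalPDF x := by
  unfold stdNormalPDF; positivity

lemma stdNormalPDF_neg (x : ℝ) : stdNormalPDF (-x) = stdNormalPDF x := by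
  simp [stdNormalPDF]

lemma antitoneOn_stdNormalPDF : AntitoneOn stdNormalPDF (Ici 0) := by
  intro x hx y _ hxy
  unfold stdNormalPDF
  gcongr

lemma integrable_stdNormalPDF : Integrable stdNormalPDF := by
  convert (integrable_exp_neg_mul_sq (b := 2⁻¹) (by norm_num)).const_mul (√(2 * π))⁻¹ using 1
  funext x
  unfold stdNormalPDF
  ring_nf

lemma stdNormalCDF_sub (a b : ℝ) :
    stdNormalCDF b - stdNormalCDF a = ∫ x in a..b, stdNormalPDF x :=
  intervalIntegral.integral_Iic_sub_Iic integrable_stdNormalPDF.integrableOn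
    integrable_stdNormalPDF.integrableOn

@[fun_prop]
lemma continuous_stdNormalCDF : Continuous stdNormalCDF := by
  have h : stdNormalCDF = fun t => stdNormalCDF 0 + ∫ x in (0 : ℝ)..t, stdNormalPDF x := by
    funext t
    rw [← stdNormalCDF_sub, add_sub_cancel]
  rw [h]
  exact continuous_const.add
    (intervalIntegral.continuous_primitive
      (fun _ _ => integrable_stdNormalPDF.intervalIntegrable) 0)

lemma strictMono_stdNormalCDF : StrictMono stdNormalCDF := fun a b hab => by
  rw [← sub_pos, stdNormalCDF_sub]
  exact intervalIntegral.intervalIntegral_pos_of_pos_on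
    integrable_stdNormalPDF.intervalIntegrable (fun x _ => stdNormalPDF_pos x) hab

lemma mul_stdNormalPDF_le_stdNormalCDF_sub {a b : ℝ} (ha : 0 ≤ a) (hab : a ≤ b) :
    (b - a) * stdNormalPDF b ≤ stdNormalCDF b - stdNormalCDF a := by
  rw [stdNormalCDF_sub, ← smul_eq_mul, ← intervalIntegral.integral_const]
  exact intervalIntegral.integral_mono_on hab intervalIntegrable_const
    integrable_stdNormalPDF.intervalIntegrable fun x hx =>
      antitoneOn_stdNormalPDF (ha.trans hx.1) (ha.trans hab) hx.2

lemma stdNormalCDF_window_neg (u L : ℝ) :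
    stdNormalCDF (-u + L) - stdNormalCDF (-u - L) =
      stdNormalCDF (u + L) - stdNormalCDF (u - L) := by
  rw [stdNormalCDF_sub, stdNormalCDF_sub]
  calc ∫ x in (-u - L)..(-u + L), stdNormalPDF x
      = ∫ x in (u - L)..(u + L), stdNormalPDF (-x) := by
        rw [intervalIntegral.integral_comp_neg, neg_add', neg_sub', sub_neg_eq_add]
    _ = ∫ x in (u - L)..(u + L), stdNormalPDF x := by simp_rw [stdNormalPDF_neg]

lemma stdNormalCDF_window_abs (u L : ℝ) :
    stdNormalCDF (|u| + L) - stdNormalCDF (|u| - L) =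
      stdNormalCDF (u + L) - stdNormalCDF (u - L) := by
  rcases abs_choice u with h | h <;> rw [h]
  exact stdNormalCDF_window_neg u L

lemma half_mul_stdNormalPDF_le_window {L u : ℝ} (hL : 0 ≤ L) (hu : L ≤ |u|) :
    L / 2 * stdNormalPDF (|u| - L / 2) ≤ stdNormalCDF (u + L) - stdNormalCDF (u - L) := by
  rw [← stdNormalCDF_window_abs]
  have hmono := strictMono_stdNormalCDF.monotone (show |u| - L / 2 ≤ |u| + L by linarith)
  have := mul_stdNormalPDF_le_stdNormalCDF_sub (a := |u| - L) (b := |u| - L / 2)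
    (by linarith) (by linarith)
  linarith

lemma one_add_sq_mul_exp_div_window_le {L u : ℝ} (hL : 0 < L) (hu : L ≤ |u|) :
    (1 + u ^ 2) * exp (-u ^ 2 / 2) / (stdNormalCDF (u + L) - stdNormalCDF (u - L)) ≤
      2 * √(2 * π) * exp (L ^ 2 / 8) / L * ((1 + |u| ^ 2) * exp (-(L / 2) * |u|)) := by
  have hD := half_mul_stdNormalPDF_le_window hL.le hu
  have hDpos : 0 < L / 2 * stdNormalPDF (|u| - L / 2) :=
    mul_pos (by positivity) (stdNormalPDF_pos _)
  have hexp : exp (-u ^ 2 / 2) =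
      exp (L ^ 2 / 8) * exp (-(L / 2) * |u|) * exp (-(|u| - L / 2) ^ 2 / 2) := by
    rw [← exp_add, ← exp_add, ← sq_abs u]
    ring_nf
  calc (1 + u ^ 2) * exp (-u ^ 2 / 2) / (stdNormalCDF (u + L) - stdNormalCDF (u - L))
      ≤ (1 + u ^ 2) * exp (-u ^ 2 / 2) / (L / 2 * stdNormalPDF (|u| - L / 2)) :=
        div_le_div_of_nonneg_left (by positivity) hDpos hD
    _ = _ := by
        rw [stdNormalPDF, hexp, sq_abs]
        field_simp

lemma isBigO_one_add_sq_mul_exp_neg_atTop {b c : ℝ} (hbc : b < c) :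
    (fun s : ℝ => (1 + s ^ 2) * exp (-c * s)) =O[atTop] fun s => exp (-b * s) := by
  have hpoly : (fun s : ℝ => 1 + s ^ 2) =o[atTop] fun s => exp ((c - b) * s) := by
    simpa using (isLittleO_pow_exp_pos_mul_atTop 0 (sub_pos.2 hbc)).add
      (isLittleO_pow_exp_pos_mul_atTop 2 (sub_pos.2 hbc))
  refine (hpoly.isBigO.mul (isBigO_refl (fun s => exp (-c * s)) atTop)).congr_right fun s => ?_
  rw [← exp_add]
  ring_nf

lemma integrable_exp_neg_mul_abs {b : ℝ} (hb : 0 < b) :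
    Integrable fun x : ℝ => exp (-b * |x|) := by
  rw [← integrableOn_univ, ← Iic_union_Ioi (a := 0)]
  refine IntegrableOn.union ?_ ?_
  · refine (integrableOn_exp_mul_Iic hb 0).congr_fun (fun x hx => ?_) measurableSet_Iic
    rw [abs_of_nonpos hx, neg_mul_neg]
  · refine (integrableOn_exp_mul_Ioi (neg_neg_of_pos hb) 0).congr_fun (fun x hx => ?_)
      measurableSet_Ioi
    rw [abs_of_pos hx]

theorem q_finite (L₀ : ℝ) (hL₀ : 0 < L₀) :
    Integrable (fun u : ℝ =>
      (1 + u ^ 2) * Real.exp (-u ^ 2 / 2) /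
        (stdNormalCDF (u + L₀) - stdNormalCDF (u - L₀))) := by
  have hwindow (u : ℝ) : 0 < stdNormalCDF (u + L₀) - stdNormalCDF (u - L₀) :=
    sub_pos.2 (strictMono_stdNormalCDF (by linarith))
  have hcont : Continuous fun u : ℝ =>
      (1 + u ^ 2) * exp (-u ^ 2 / 2) / (stdNormalCDF (u + L₀) - stdNormalCDF (u - L₀)) :=
    .div (by fun_prop) (by fun_prop) fun u => (hwindow u).ne'
  refine hcont.locallyIntegrable.integrable_of_isBigO_cocompact
    (g := fun u => exp (-(L₀ / 4) * |u|)) ?_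
    ((integrable_exp_neg_mul_abs (by positivity)).integrableAtFilter _)
  calc _ =O[cocompact ℝ] fun u : ℝ => (1 + |u| ^ 2) * exp (-(L₀ / 2) * |u|) := by
        refine IsBigO.of_bound (2 * √(2 * π) * exp (L₀ ^ 2 / 8) / L₀) ?_
        filter_upwards [tendsto_norm_cocompact_atTop.eventually_ge_atTop L₀] with u hu
        rw [norm_of_nonneg (div_nonneg (by positivity) (hwindow u).le),
          norm_of_nonneg (by positivity)]
        exact one_add_sq_mul_exp_div_window_le hL₀ hu
    _ =O[cocompact ℝ] _ := (isBigO_one_add_sq_mul_exp_neg_atTop (by linarith)).comp_tendsto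
        tendsto_norm_cocompact_atTop
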